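/- For p ≥ 1, the sequence Sr(n,p) counting nonempty intervals F ⊆ {1,...,n} with p·min F ≥ |F| satisfies Sr(1,p) = 1, and in particular Sr(N,p) = 1 + Σ_{n=1}^{N-1} (n + 2 - ⌈(n+2)/(p+1)⌉) for all N ≥ 1. -/

import Mathlib

/-- Ceiling of a / b for natural numbers. -/
def ceilDiv (a b : ℕ) : ℕ := (a + b - 1) / b

/-- Number of nonempty intervals F ⊆ {1,...,n} with p·min F ≥ |F|. -/
noncomputable def Sr (n p : ℕ) : ℕ :=
  Nat.card {F : Finset ℕ //
    (∃ a b : ℕ, a ≤ b ∧ F = Finset.Icc a b) ∧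
    F ⊆ Finset.Icc 1 n ∧
    p * sInf (F : Set ℕ) ≥ F.card}

def pairsA (n p : ℕ) : Finset (ℕ × ℕ) :=
  (Finset.Icc 1 n ×ˢ Finset.Icc 1 n).filter
    (fun ab => ab.1 ≤ ab.2 ∧ ab.2 + 1 - ab.1 ≤ p * ab.1)

lemma ceilDiv_le_iff {a b c : ℕ} (hb : 0 < b) : ceilDiv a b ≤ c ↔ a ≤ c * b := by
  unfold ceilDiv
  rw [Nat.div_le_iff_le_mul_add_pred hb]
  have h : b * c = c * b := by ring
  rw [h]
  set d := c * b
  omega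

lemma sInf_Icc_coe {a b : ℕ} (hab : a ≤ b) : sInf ((Finset.Icc a b : Finset ℕ) : Set ℕ) = a := by
  have ha : a ∈ ((Finset.Icc a b : Finset ℕ) : Set ℕ) := by
    simp [Finset.mem_Icc, hab]
  apply le_antisymm (Nat.sInf_le ha)
  apply le_csInf ⟨a, ha⟩
  intro x hx
  simp only [Finset.coe_Icc, Set.mem_Icc] at hx
  exact hx.1

lemma Sr_eq_card (n p : ℕ) : Sr n p = (pairsA n p).card := by
  rw [Sr]
  have hset : {F : Finset ℕ |
      (∃ a b : ℕ, a ≤ b ∧ F = Finset.Icc a b) ∧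
      F ⊆ Finset.Icc 1 n ∧
      p * sInf (F : Set ℕ) ≥ F.card}
      = ↑((pairsA n p).image (fun ab => Finset.Icc ab.1 ab.2)) := by
    ext F
    simp only [Set.mem_setOf_eq, Finset.coe_image, Set.mem_image, Finset.mem_coe]
    constructor
    · rintro ⟨⟨a, b, hab, rfl⟩, hsub, hcard⟩
      refine ⟨(a, b), ?_, rfl⟩
      have ha : a ∈ Finset.Icc a b := by simp [hab]
      have hb : b ∈ Finset.Icc a b := by simp [hab]
      have h1 := hsub ha
      have h2 := hsub hb
      simp only [Finset.mem_Icc] at h1 h2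
      rw [sInf_Icc_coe hab, Nat.card_Icc] at hcard
      simp only [pairsA, Finset.mem_filter, Finset.mem_product, Finset.mem_Icc]
      exact ⟨⟨⟨h1.1, h1.2⟩, ⟨h2.1, h2.2⟩⟩, hab, hcard⟩
    · rintro ⟨⟨a, b⟩, hmem, rfl⟩
      simp only [pairsA, Finset.mem_filter, Finset.mem_product, Finset.mem_Icc] at hmem
      obtain ⟨⟨⟨ha1, ha2⟩, ⟨hb1, hb2⟩⟩, hab, hcard⟩ := hmem
      refine ⟨⟨a, b, hab, rfl⟩, ?_, ?_⟩
      · exact Finset.Icc_subset_Icc ha1 hb2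
      · rw [sInf_Icc_coe hab, Nat.card_Icc]
        exact hcard
  calc Nat.card {F : Finset ℕ //
      (∃ a b : ℕ, a ≤ b ∧ F = Finset.Icc a b) ∧
      F ⊆ Finset.Icc 1 n ∧
      p * sInf (F : Set ℕ) ≥ F.card}
      = Set.ncard {F : Finset ℕ |
      (∃ a b : ℕ, a ≤ b ∧ F = Finset.Icc a b) ∧
      F ⊆ Finset.Icc 1 n ∧
      p * sInf (F : Set ℕ) ≥ F.card} := Nat.card_coe_set_eq _
    _ = ((pairsA n p).image (fun ab => Finset.Icc ab.1 ab.2)).card := by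
        rw [hset, Set.ncard_coe_finset]
    _ = (pairsA n p).card := by
        apply Finset.card_image_of_injOn
        rintro ⟨a, b⟩ hab ⟨a', b'⟩ hab' heq
        simp only [pairsA, Finset.mem_coe, Finset.mem_filter] at hab hab'
        have h1 : a ≤ b := hab.2.1
        have h2 : a' ≤ b' := hab'.2.1
        simp only at heq
        have ha : a ∈ Finset.Icc a' b' := heq ▸ (by simp [h1])
        have ha' : a' ∈ Finset.Icc a b := heq ▸ (by simp [h2])
        have hb : b ∈ Finset.Icc a' b' := heq ▸ (by simp [h1])
        have hb' : b' ∈ Finset.Icc a b := heq ▸ (by simp [h2])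
        simp only [Finset.mem_Icc] at ha ha' hb hb'
        have : a = a' := le_antisymm ha'.1 ha.1
        have : b = b' := le_antisymm hb.2 hb'.2
        simp_all

lemma pairsA_succ (p n : ℕ) (hp : 1 ≤ p) :
    (pairsA (n + 1) p).card = (pairsA n p).card + (n + 2 - ceilDiv (n + 2) (p + 1)) := by
  set c := ceilDiv (n + 2) (p + 1) with hc
  have hc1 : 1 ≤ c := by
    by_contra h
    have := (ceilDiv_le_iff (a := n + 2) (b := p + 1) (c := 0) (by omega)).mp (by omega)
    omega
  have hc2 : c ≤ n + 1 := by
    rw [hc, ceilDiv_le_iff (by omega)]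
    nlinarith
  have key : pairsA (n + 1) p
      = pairsA n p ∪ (Finset.Icc c (n + 1)).image (fun a => (a, n + 1)) := by
    ext ⟨a, b⟩
    simp only [pairsA, Finset.mem_union, Finset.mem_filter, Finset.mem_product,
      Finset.mem_Icc, Finset.mem_image, Prod.mk.injEq]
    have hiff : ∀ a : ℕ, 1 ≤ a → (c ≤ a ↔ n + 2 - a ≤ p * a) := by
      intro a ha
      rw [hc, ceilDiv_le_iff (by omega)]
      have : a * (p + 1) = p * a + a := by ring
      rw [this]
      set m := p * a
      omega
    constructor
    · rintro ⟨⟨⟨ha1, ha2⟩, hb1, hb2⟩, hab, hcard⟩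
      rcases Nat.lt_or_ge b (n + 1) with hb | hb
      · exact Or.inl ⟨⟨⟨ha1, by omega⟩, hb1, by omega⟩, hab, hcard⟩
      · right
        have hbeq : b = n + 1 := by omega
        subst hbeq
        refine ⟨a, ⟨?_, by omega⟩, rfl, rfl⟩
        rw [hiff a ha1]
        omega
    · rintro (⟨⟨⟨ha1, ha2⟩, hb1, hb2⟩, hab, hcard⟩ | ⟨a', ⟨hca, ha'⟩, rfl, rfl⟩)
      · exact ⟨⟨⟨ha1, by omega⟩, hb1, by omega⟩, hab, hcard⟩
      · have h1 : 1 ≤ a' := le_trans hc1 hca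
        refine ⟨⟨⟨h1, ha'⟩, by omega, le_refl _⟩, ha', ?_⟩
        have := (hiff a' h1).mp hca
        omega
  have hinj : Function.Injective (fun a : ℕ => (a, n + 1)) := by
    intro x y hxy
    simpa using hxy
  have hdisj : Disjoint (pairsA n p) ((Finset.Icc c (n + 1)).image (fun a => (a, n + 1))) := by
    rw [Finset.disjoint_left]
    rintro ⟨a, b⟩ hmem hmem2
    simp only [pairsA, Finset.mem_filter, Finset.mem_product, Finset.mem_Icc] at hmem
    simp only [Finset.mem_image, Finset.mem_Icc, Prod.mk.injEq] at hmem2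
    obtain ⟨a', _, _, hb⟩ := hmem2
    omega
  rw [key, Finset.card_union_of_disjoint hdisj, Finset.card_image_of_injective _ hinj,
    Nat.card_Icc]

lemma pairsA_card (p : ℕ) (hp : 1 ≤ p) :
    ∀ N : ℕ, 1 ≤ N →
      (pairsA N p).card = 1 + ∑ n ∈ Finset.Icc 1 (N - 1), (n + 2 - ceilDiv (n + 2) (p + 1)) := by
  intro N
  induction N with
  | zero => omega
  | succ N ih =>
    intro _
    rcases Nat.eq_zero_or_pos N with rfl | hN
    · rw [pairsA_succ p 0 hp]
      have h0 : (pairsA 0 p).card = 0 := by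
        simp [pairsA]
      have hcd : ceilDiv 2 (p + 1) = 1 := by
        have h1 := (ceilDiv_le_iff (a := 2) (b := p + 1) (c := 1) (by omega)).mpr (by omega)
        have h2 : ¬ ceilDiv 2 (p + 1) ≤ 0 := by
          intro h
          have := (ceilDiv_le_iff (a := 2) (b := p + 1) (c := 0) (by omega)).mp h
          omega
        omega
      simp [h0, hcd]
    · obtain ⟨M, rfl⟩ : ∃ M, N = M + 1 := ⟨N - 1, by omega⟩
      rw [pairsA_succ p (M + 1) hp, ih (by omega)]
      have hs : Finset.Icc 1 (M + 1 + 1 - 1) = Finset.Icc 1 (M + 1) := by norm_num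
      rw [hs, Finset.sum_Icc_succ_top (by omega : 1 ≤ M + 1)]
      simp only [Nat.add_sub_cancel]
      ring

theorem stmt_16 (p : ℕ) (hp : 1 ≤ p) :
    Sr 1 p = 1 ∧
    ∀ N : ℕ, 1 ≤ N →
      Sr N p = 1 + ∑ n ∈ Finset.Icc 1 (N - 1), (n + 2 - ceilDiv (n + 2) (p + 1)) := by
  constructor
  · rw [Sr_eq_card, pairsA_card p hp 1 le_rfl]
    simp
  · intro N hN
    rw [Sr_eq_card]
    exact pairsA_card p hp N hN
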